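/- Let A be a Banach algebra, a, b ∈ A, and suppose f is holomorphic on an open set containing σ(a) ∪ σ(b). If d_ρ(a,b) = 0 (so ρ(a,b) = ρ(b,a) = 0), then d_ρ(f(a), f(b)) = 0, where f(a), f(b) are given by the holomorphic functional calculus. -/
import Mathlib


/-- The iterated commutator `C_{a,b}^n` applied to `1`, where `C_{a,b}(x) = a*x - x*b`. -/
noncomputable def citer {A : Type*} [Ring A] (a b : A) (n : ℕ) : A :=
  (fun x => a * x - x * b)^[n] 1

/-- `ρ(a,b) = limsup_n ‖C_{a,b}^n(1)‖^{1/n}`. -/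
noncomputable def rho {A : Type*} [NormedRing A] (a b : A) : ℝ :=
  Filter.limsup (fun n : ℕ => ‖citer a b n‖ ^ ((n : ℝ)⁻¹)) Filter.atTop

open Filter Metric Set MeasureTheory

lemma citer_succ {A : Type*} [Ring A] (a b : A) (n : ℕ) :
    citer a b (n + 1) = a * citer a b n - citer a b n * b := by
  simp only [citer, Function.iterate_succ_apply']

lemma norm_citer_le {A : Type*} [NormedRing A] (a b : A) (n : ℕ) :
    ‖citer a b n‖ ≤ (‖a‖ + ‖b‖) ^ n * ‖(1 : A)‖ := by
  induction n with
  | zero => simp [citer]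
  | succ n ih =>
    rw [citer_succ]
    calc ‖a * citer a b n - citer a b n * b‖
        ≤ ‖a * citer a b n‖ + ‖citer a b n * b‖ := norm_sub_le _ _
      _ ≤ ‖a‖ * ‖citer a b n‖ + ‖citer a b n‖ * ‖b‖ :=
          add_le_add (norm_mul_le _ _) (norm_mul_le _ _)
      _ = (‖a‖ + ‖b‖) * ‖citer a b n‖ := by ring
      _ ≤ (‖a‖ + ‖b‖) * ((‖a‖ + ‖b‖) ^ n * ‖(1 : A)‖) := by
          apply mul_le_mul_of_nonneg_left ih (by positivity)
      _ = (‖a‖ + ‖b‖) ^ (n + 1) * ‖(1 : A)‖ := by ring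

lemma rpow_aux {S N : ℝ} (hS : 0 ≤ S) (hN : 0 ≤ N) {n : ℕ} (hn : n ≠ 0) :
    (S ^ n * N) ^ ((n : ℝ)⁻¹) = S * N ^ ((n : ℝ)⁻¹) := by
  have hn' : (n : ℝ) ≠ 0 := Nat.cast_ne_zero.mpr hn
  rw [Real.mul_rpow (pow_nonneg hS n) hN, ← Real.rpow_natCast S n, ← Real.rpow_mul hS,
    mul_inv_cancel₀ hn', Real.rpow_one]

lemma rpow_inv_le_max {N : ℝ} (hN : 0 ≤ N) {n : ℕ} (hn : n ≠ 0) :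
    N ^ ((n : ℝ)⁻¹) ≤ max 1 N := by
  have h1 : (0:ℝ) < (n : ℝ) := by exact_mod_cast Nat.pos_of_ne_zero hn
  have hinv : (0:ℝ) ≤ (n : ℝ)⁻¹ := by positivity
  rcases le_or_gt N 1 with h | h
  · exact le_max_of_le_left (Real.rpow_le_one hN h hinv)
  · refine le_max_of_le_right ?_
    calc N ^ ((n : ℝ)⁻¹) ≤ N ^ (1:ℝ) := by
          apply Real.rpow_le_rpow_of_exponent_le h.le
          rw [inv_le_one_iff₀]
          right; exact_mod_cast Nat.one_le_iff_ne_zero.mpr hn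
      _ = N := Real.rpow_one N

/-- The sequence `n ↦ ‖citer a b n‖^(1/n)` is bounded above. -/
lemma citer_seq_bdd {A : Type*} [NormedRing A] (a b : A) :
    ∃ K : ℝ, ∀ n : ℕ, ‖citer a b n‖ ^ ((n : ℝ)⁻¹) ≤ K := by
  refine ⟨max 1 ((‖a‖ + ‖b‖) * max 1 ‖(1 : A)‖), fun n => ?_⟩
  rcases eq_or_ne n 0 with rfl | hn
  · simp
  · refine le_max_of_le_right ?_
    calc ‖citer a b n‖ ^ ((n : ℝ)⁻¹)
        ≤ ((‖a‖ + ‖b‖) ^ n * ‖(1 : A)‖) ^ ((n : ℝ)⁻¹) :=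
          Real.rpow_le_rpow (norm_nonneg _) (norm_citer_le a b n) (by positivity)
      _ = (‖a‖ + ‖b‖) * ‖(1 : A)‖ ^ ((n : ℝ)⁻¹) := rpow_aux (by positivity) (norm_nonneg _) hn
      _ ≤ (‖a‖ + ‖b‖) * max 1 ‖(1 : A)‖ := by
          apply mul_le_mul_of_nonneg_left (rpow_inv_le_max (norm_nonneg _) hn) (by positivity)

lemma tendsto_citer_seq {A : Type*} [NormedRing A] {a b : A} (hab : rho a b = 0) :
    Filter.Tendsto (fun n : ℕ => ‖citer a b n‖ ^ ((n : ℝ)⁻¹)) atTop (nhds 0) := by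
  set u : ℕ → ℝ := fun n => ‖citer a b n‖ ^ ((n : ℝ)⁻¹) with hu
  obtain ⟨K, hK⟩ := citer_seq_bdd a b
  have hbdd : IsBoundedUnder (· ≤ ·) atTop u := Filter.isBoundedUnder_of ⟨K, hK⟩
  have hbdd' : IsBoundedUnder (· ≥ ·) atTop u :=
    Filter.isBoundedUnder_of ⟨0, fun n => Real.rpow_nonneg (norm_nonneg _) _⟩
  have hlimsup : limsup u atTop = 0 := hab
  have hliminf : liminf u atTop = 0 := by
    apply le_antisymm
    · rw [← hlimsup]; exact liminf_le_limsup hbdd hbdd'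
    · apply Filter.le_liminf_of_le hbdd.isCoboundedUnder_ge
      exact Filter.Eventually.of_forall fun n => Real.rpow_nonneg (norm_nonneg _) _
  exact tendsto_of_liminf_eq_limsup hliminf hlimsup hbdd hbdd'

lemma rho_eq_zero_of_le {A : Type*} [NormedRing A] {a b a' b' : A} {M : ℝ} (hM : 0 ≤ M)
    (h : ∀ n : ℕ, ‖citer a' b' n‖ ≤ M ^ n * ‖citer a b n‖) (hab : rho a b = 0) :
    rho a' b' = 0 := by
  have htend : Filter.Tendsto (fun n : ℕ => ‖citer a' b' n‖ ^ ((n : ℝ)⁻¹)) atTop (nhds 0) := by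
    have hg : Filter.Tendsto (fun n : ℕ => M * ‖citer a b n‖ ^ ((n : ℝ)⁻¹)) atTop (nhds 0) := by
      simpa using (tendsto_citer_seq hab).const_mul M
    apply squeeze_zero' (Filter.Eventually.of_forall fun n => Real.rpow_nonneg (norm_nonneg _) _)
      ?_ hg
    filter_upwards [Filter.eventually_ge_atTop 1] with n hn
    calc ‖citer a' b' n‖ ^ ((n : ℝ)⁻¹)
        ≤ (M ^ n * ‖citer a b n‖) ^ ((n : ℝ)⁻¹) :=
          Real.rpow_le_rpow (norm_nonneg _) (h n) (by positivity)
      _ = M * ‖citer a b n‖ ^ ((n : ℝ)⁻¹) :=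
          rpow_aux hM (norm_nonneg _) (by omega)
  exact htend.limsup_eq

section main
variable {A : Type*} [NormedRing A] [NormedAlgebra ℂ A] [CompleteSpace A]

lemma clm_circleIntegral (L : A →L[ℂ] A) {g : ℂ → A} {c : ℂ} {r : ℝ}
    (hg : CircleIntegrable g c r) :
    L (∮ z in C(c, r), g z) = ∮ z in C(c, r), L (g z) := by
  simp only [circleIntegral]
  rw [← L.intervalIntegral_comp_comm hg.out]
  congr 1
  ext θ
  exact L.map_smul _ _

omit [NormedAlgebra ℂ A] [CompleteSpace A] in
lemma res_id {u v : A} (hu : IsUnit u) (hv : IsUnit v) (x : A) :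
    Ring.inverse u * x - x * Ring.inverse v
      = Ring.inverse u * (x * v - u * x) * Ring.inverse v := by
  obtain ⟨u', rfl⟩ := hu
  obtain ⟨v', rfl⟩ := hv
  rw [Ring.inverse_unit, Ring.inverse_unit, mul_sub, sub_mul, ← mul_assoc,
    mul_assoc (↑u'⁻¹ * x)]
  simp [Units.inv_mul_cancel_left]

omit [NormedAlgebra ℂ A] [CompleteSpace A] in
lemma commute_ring_inverse {u x : A} (hu : IsUnit u) (h : Commute x u) :
    Commute x (Ring.inverse u) := by
  rw [← hu.unit_spec] at h ⊢
  rw [Ring.inverse_unit]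
  exact h.units_inv_right

omit [NormedAlgebra ℂ A] [CompleteSpace A] in
lemma shuffle {a b p q : A} (hp : a * p = p * a) (hq : q * b = b * q) (y : A) :
    a * (p * y * q) - p * y * q * b = p * (a * y - y * b) * q := by
  rw [mul_sub, sub_mul, ← mul_assoc, ← mul_assoc, hp, mul_assoc p a y,
    mul_assoc (p * y) q b, hq, ← mul_assoc, ← mul_assoc, mul_assoc p y b]

lemma key (a b : A) (c : ℂ) (r : ℝ) (hr : 0 < r) (f : ℂ → ℂ)
    (hf : ContinuousOn f (sphere c r))
    (ha : ∀ z ∈ sphere c r, IsUnit (algebraMap ℂ A z - a))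
    (hb : ∀ z ∈ sphere c r, IsUnit (algebraMap ℂ A z - b))
    (fa fb : A)
    (hfa : fa = (2 * Real.pi * Complex.I)⁻¹ •
      (∮ z in C(c, r), f z • Ring.inverse (algebraMap ℂ A z - a)))
    (hfb : fb = (2 * Real.pi * Complex.I)⁻¹ •
      (∮ z in C(c, r), f z • Ring.inverse (algebraMap ℂ A z - b)))
    (hab : rho a b = 0) : rho fa fb = 0 := by
  have hr' : (0:ℝ) ≤ r := hr.le
  set sc : ℂ := (2 * Real.pi * Complex.I)⁻¹ with hsc
  set Ra : ℂ → A := fun z => Ring.inverse (algebraMap ℂ A z - a) with hRa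
  set Rb : ℂ → A := fun z => Ring.inverse (algebraMap ℂ A z - b) with hRb
  -- continuity of resolvents
  have hRac : ContinuousOn Ra (sphere c r) := by
    intro z hz
    have h1 : ContinuousAt (fun w : ℂ => algebraMap ℂ A w - a) z :=
      ((continuous_algebraMap ℂ A).continuousAt).sub continuousAt_const
    have h2 : ContinuousAt Ring.inverse (algebraMap ℂ A z - a) := by
      have := NormedRing.inverse_continuousAt (ha z hz).unit
      rwa [IsUnit.unit_spec] at this
    have h3 := ContinuousAt.comp (f := fun w : ℂ => algebraMap ℂ A w - a) (x := z) h2 h1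
    exact h3.continuousWithinAt
  have hRbc : ContinuousOn Rb (sphere c r) := by
    intro z hz
    have h1 : ContinuousAt (fun w : ℂ => algebraMap ℂ A w - b) z :=
      ((continuous_algebraMap ℂ A).continuousAt).sub continuousAt_const
    have h2 : ContinuousAt Ring.inverse (algebraMap ℂ A z - b) := by
      have := NormedRing.inverse_continuousAt (hb z hz).unit
      rwa [IsUnit.unit_spec] at this
    have h3 := ContinuousAt.comp (f := fun w : ℂ => algebraMap ℂ A w - b) (x := z) h2 h1
    exact h3.continuousWithinAt
  -- integrability facts
  have hint : ∀ y : A, CircleIntegrable (fun z => f z • (Ra z * y * Rb z)) c r := fun y =>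
    ContinuousOn.circleIntegrable hr' (hf.smul ((hRac.mul continuousOn_const).mul hRbc))
  have hi1 : CircleIntegrable (fun z => f z • Ra z) c r :=
    ContinuousOn.circleIntegrable hr' (hf.smul hRac)
  have hi2 : CircleIntegrable (fun z => f z • Rb z) c r :=
    ContinuousOn.circleIntegrable hr' (hf.smul hRbc)
  -- the operator T
  set T : A → A := fun y => sc • ∮ z in C(c, r), f z • (Ra z * y * Rb z) with hT
  -- commutation of a with Ra z, b with Rb z
  have hca : ∀ z ∈ sphere c r, a * Ra z = Ra z * a := fun z hz =>
    (commute_ring_inverse (ha z hz)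
      (Commute.sub_right ((Algebra.commutes z a).symm) (Commute.refl a))).eq
  have hcb : ∀ z ∈ sphere c r, Rb z * b = b * Rb z := fun z hz =>
    ((commute_ring_inverse (hb z hz)
      (Commute.sub_right ((Algebra.commutes z b).symm) (Commute.refl b))).eq).symm
  -- Step (i)
  have stepi : ∀ x : A, fa * x - x * fb = T (a * x - x * b) := by
    intro x
    have hi1' : CircleIntegrable (fun z => (f z • Ra z) * x) c r :=
      ContinuousOn.circleIntegrable hr' ((hf.smul hRac).mul continuousOn_const)
    have hi2' : CircleIntegrable (fun z => x * (f z • Rb z)) c r :=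
      ContinuousOn.circleIntegrable hr' (continuousOn_const.mul (hf.smul hRbc))
    have e1 : (∮ z in C(c, r), f z • Ra z) * x = ∮ z in C(c, r), (f z • Ra z) * x := by
      have := clm_circleIntegral ((ContinuousLinearMap.mul ℂ A).flip x) hi1
      simpa only [ContinuousLinearMap.flip_apply, ContinuousLinearMap.mul_apply'] using this
    have e2 : x * (∮ z in C(c, r), f z • Rb z) = ∮ z in C(c, r), x * (f z • Rb z) := by
      have := clm_circleIntegral (ContinuousLinearMap.mul ℂ A x) hi2
      simpa only [ContinuousLinearMap.mul_apply'] using this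
    rw [hfa, hfb, smul_mul_assoc, mul_smul_comm, ← smul_sub, e1, e2,
      ← circleIntegral.integral_sub hi1' hi2', hT]
    congr 1
    apply circleIntegral.integral_congr hr'
    intro z hz
    show (f z • Ra z) * x - x * (f z • Rb z) = f z • (Ra z * (a * x - x * b) * Rb z)
    rw [smul_mul_assoc, mul_smul_comm, ← smul_sub]
    congr 1
    have hcomm : (algebraMap ℂ A z) * x = x * algebraMap ℂ A z := Algebra.commutes z x
    have hmid : x * (algebraMap ℂ A z - b) - (algebraMap ℂ A z - a) * x = a * x - x * b := by
      rw [mul_sub, sub_mul, hcomm]; abel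
    rw [res_id (ha z hz) (hb z hz) x, hmid]
  -- Step (ii)
  have stepii : ∀ y : A, T (a * y - y * b) = a * T y - T y * b := by
    intro y
    have e1 : a * (∮ z in C(c, r), f z • (Ra z * y * Rb z))
        = ∮ z in C(c, r), f z • (a * (Ra z * y * Rb z)) := by
      have h := clm_circleIntegral (ContinuousLinearMap.mul ℂ A a) (hint y)
      simp only [ContinuousLinearMap.mul_apply'] at h
      rw [h]
      congr 1
      funext z
      rw [mul_smul_comm]
    have e2 : (∮ z in C(c, r), f z • (Ra z * y * Rb z)) * b
        = ∮ z in C(c, r), f z • ((Ra z * y * Rb z) * b) := by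
      have h := clm_circleIntegral ((ContinuousLinearMap.mul ℂ A).flip b) (hint y)
      simp only [ContinuousLinearMap.flip_apply, ContinuousLinearMap.mul_apply'] at h
      rw [h]
      congr 1
      funext z
      rw [smul_mul_assoc]
    have hi1'' : CircleIntegrable (fun z => f z • (a * (Ra z * y * Rb z))) c r :=
      ContinuousOn.circleIntegrable hr'
        (hf.smul (continuousOn_const.mul ((hRac.mul continuousOn_const).mul hRbc)))
    have hi2'' : CircleIntegrable (fun z => f z • ((Ra z * y * Rb z) * b)) c r :=
      ContinuousOn.circleIntegrable hr'
        (hf.smul (((hRac.mul continuousOn_const).mul hRbc).mul continuousOn_const))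
    show sc • (∮ z in C(c, r), f z • (Ra z * (a * y - y * b) * Rb z))
        = a * (sc • ∮ z in C(c, r), f z • (Ra z * y * Rb z))
          - (sc • ∮ z in C(c, r), f z • (Ra z * y * Rb z)) * b
    rw [mul_smul_comm, smul_mul_assoc, e1, e2, ← smul_sub,
      ← circleIntegral.integral_sub hi1'' hi2'']
    congr 1
    apply circleIntegral.integral_congr hr'
    intro z hz
    show f z • (Ra z * (a * y - y * b) * Rb z)
        = f z • (a * (Ra z * y * Rb z)) - f z • ((Ra z * y * Rb z) * b)
    rw [← smul_sub]
    congr 1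
    exact (shuffle (hca z hz) (hcb z hz) y).symm
  -- iterates of T
  have stepii_iter : ∀ (n : ℕ) (y : A), T^[n] (a * y - y * b) = a * T^[n] y - T^[n] y * b := by
    intro n
    induction n with
    | zero => intro y; simp
    | succ n ih =>
      intro y
      rw [Function.iterate_succ_apply', Function.iterate_succ_apply',
        ih y, stepii]
  -- citer identity
  have hciter : ∀ n : ℕ, citer fa fb n = T^[n] (citer a b n) := by
    intro n
    induction n with
    | zero => simp [citer]
    | succ n ih =>
      rw [citer_succ, citer_succ, ih, Function.iterate_succ_apply' T, stepii_iter n]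
      exact stepi _
  -- norm bound on T
  obtain ⟨C, hC⟩ := (isCompact_sphere c r).exists_bound_of_continuousOn
    (hf.norm.mul (hRac.norm.mul hRbc.norm))
  set M₀ : ℝ := max C 0 with hM₀def
  have hM₀ : ∀ z ∈ sphere c r, ‖f z‖ * (‖Ra z‖ * ‖Rb z‖) ≤ M₀ := fun z hz =>
    le_trans (le_trans (le_abs_self _) (hC z hz)) (le_max_left _ _)
  have hM₀0 : 0 ≤ M₀ := le_max_right _ _
  have hscn : ‖sc‖ = (2 * Real.pi)⁻¹ := by
    rw [hsc]
    rw [norm_inv, norm_mul, norm_mul, Complex.norm_I, Complex.norm_ofNat, Complex.norm_real,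
      Real.norm_eq_abs, abs_of_nonneg Real.pi_pos.le, mul_one]
  have hTnorm : ∀ y : A, ‖T y‖ ≤ (r * M₀) * ‖y‖ := by
    intro y
    have hb1 : ∀ z ∈ sphere c r, ‖f z • (Ra z * y * Rb z)‖ ≤ M₀ * ‖y‖ := by
      intro z hz
      rw [norm_smul]
      calc ‖f z‖ * ‖Ra z * y * Rb z‖
          ≤ ‖f z‖ * (‖Ra z‖ * ‖y‖ * ‖Rb z‖) := by
            apply mul_le_mul_of_nonneg_left _ (norm_nonneg _)
            exact le_trans (norm_mul_le _ _)
              (mul_le_mul_of_nonneg_right (norm_mul_le _ _) (norm_nonneg _))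
        _ = (‖f z‖ * (‖Ra z‖ * ‖Rb z‖)) * ‖y‖ := by ring
        _ ≤ M₀ * ‖y‖ := mul_le_mul_of_nonneg_right (hM₀ z hz) (norm_nonneg _)
    have h2 := circleIntegral.norm_integral_le_of_norm_le_const hr' hb1
    calc ‖T y‖ = ‖sc‖ * ‖∮ z in C(c, r), f z • (Ra z * y * Rb z)‖ := norm_smul _ _
      _ ≤ ‖sc‖ * (2 * Real.pi * r * (M₀ * ‖y‖)) :=
          mul_le_mul_of_nonneg_left h2 (norm_nonneg _)
      _ = (r * M₀) * ‖y‖ := by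
          rw [hscn]
          have hπ : Real.pi ≠ 0 := Real.pi_ne_zero
          field_simp
  have hTn : ∀ (n : ℕ) (y : A), ‖T^[n] y‖ ≤ (r * M₀) ^ n * ‖y‖ := by
    intro n
    induction n with
    | zero => intro y; simp
    | succ n ih =>
      intro y
      rw [Function.iterate_succ_apply']
      calc ‖T (T^[n] y)‖ ≤ (r * M₀) * ‖T^[n] y‖ := hTnorm _
        _ ≤ (r * M₀) * ((r * M₀) ^ n * ‖y‖) := by
            apply mul_le_mul_of_nonneg_left (ih y) (by positivity)
        _ = (r * M₀) ^ (n + 1) * ‖y‖ := by ring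
  exact rho_eq_zero_of_le (M := r * M₀) (by positivity)
    (fun n => by rw [hciter n]; exact hTn n (citer a b n)) hab

end main

/-- Quasinilpotent equivalence is preserved by the holomorphic functional calculus.
Since Mathlib has no general holomorphic functional calculus, the elements f(a), f(b)
are expressed by the Cauchy-integral formula over a circle in the domain of
holomorphy enclosing the spectra. -/
theorem stmt_17 {A : Type*} [NormedRing A] [NormedAlgebra ℂ A] [CompleteSpace A]
    (a b : A) (U : Set ℂ) (hU : IsOpen U) (f : ℂ → ℂ) (hf : DifferentiableOn ℂ f U)
    (c : ℂ) (r : ℝ) (hr : 0 < r)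
    (hspec : spectrum ℂ a ∪ spectrum ℂ b ⊆ Metric.ball c r)
    (hball : Metric.closedBall c r ⊆ U)
    (fa fb : A)
    (hfa : fa = (2 * Real.pi * Complex.I)⁻¹ •
      (∮ z in C(c, r), f z • Ring.inverse (algebraMap ℂ A z - a)))
    (hfb : fb = (2 * Real.pi * Complex.I)⁻¹ •
      (∮ z in C(c, r), f z • Ring.inverse (algebraMap ℂ A z - b)))
    (hab : rho a b = 0) (hba : rho b a = 0) :
    rho fa fb = 0 ∧ rho fb fa = 0 := by
  have fcont : ContinuousOn f (Metric.sphere c r) :=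
    hf.continuousOn.mono fun z hz => hball (Metric.sphere_subset_closedBall hz)
  have hA : ∀ z ∈ Metric.sphere c r, IsUnit (algebraMap ℂ A z - a) := by
    intro z hz
    apply spectrum.notMem_iff.mp
    intro hmem
    have h1 : z ∈ Metric.ball c r := hspec (Or.inl hmem)
    rw [Metric.mem_sphere] at hz
    rw [Metric.mem_ball] at h1
    exact absurd hz (ne_of_lt h1)
  have hB : ∀ z ∈ Metric.sphere c r, IsUnit (algebraMap ℂ A z - b) := by
    intro z hz
    apply spectrum.notMem_iff.mp
    intro hmem
    have h1 : z ∈ Metric.ball c r := hspec (Or.inr hmem)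
    rw [Metric.mem_sphere] at hz
    rw [Metric.mem_ball] at h1
    exact absurd hz (ne_of_lt h1)
  exact ⟨key a b c r hr f fcont hA hB fa fb hfa hfb hab,
    key b a c r hr f fcont hB hA fb fa hfb hfa hba⟩
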